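/- arXiv:2603.11448 — 6 statements merged into one kernel-verified Lean document; each statement's English description precedes it below -/
import Mathlib

section
/- If C is a convex cone of functions on a compact metric space X that contains all constant functions and is closed under pointwise minimum, then for any bounded upper semicontinuous function f on X, the C-envelope of f, defined as the pointwise infimum of all functions g in C with g ≥ f, again belongs to C, provided C is closed under bounded decreasing pointwise limits and every element of C admits a decreasing sequence of continuous functions in C converging to it pointwise. -/
open Filter Topology

/-! Call `g` admissible if `g ∈ C` and `f ≤ g`. Every admissible `g` is the decreasing limit of
continuous admissible functions, so the envelope `F` is also the pointwise infimum of the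
continuous admissible functions. These form a subset of the separable space `C(X, ℝ)`, so a
dense sequence `φ n` among them already has pointwise infimum `F`. The running minima of `φ`
stay in `C`, decrease, and converge to `F`, which therefore lies in `C` by closedness under
decreasing limits. -/

section RunningMin

variable {X : Type*}

def runningMin (φ : ℕ → X → ℝ) : ℕ → X → ℝ
  | 0 => φ 0
  | n + 1 => fun x => min (runningMin φ n x) (φ (n + 1) x)

variable (φ : ℕ → X → ℝ)

theorem runningMin_succ_le (n : ℕ) (x : X) : runningMin φ (n + 1) x ≤ runningMin φ n x :=
  min_le_left _ _

theorem antitone_runningMin (x : X) : Antitone fun n => runningMin φ n x :=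
  antitone_nat_of_succ_le fun n => runningMin_succ_le φ n x

theorem runningMin_le (n : ℕ) (x : X) : runningMin φ n x ≤ φ n x := by
  cases n with
  | zero => exact le_rfl
  | succ n => exact min_le_right _ _

variable {φ}

theorem le_runningMin {a : ℝ} {x : X} (h : ∀ n, a ≤ φ n x) (n : ℕ) : a ≤ runningMin φ n x := by
  induction n with
  | zero => exact h 0
  | succ n ih => exact le_min ih (h (n + 1))

theorem runningMin_mem {C : Set (X → ℝ)}
    (hmin : ∀ g₁ ∈ C, ∀ g₂ ∈ C, (fun x => min (g₁ x) (g₂ x)) ∈ C) (hφ : ∀ n, φ n ∈ C)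
    (n : ℕ) : runningMin φ n ∈ C := by
  induction n with
  | zero => exact hφ 0
  | succ n ih => exact hmin _ ih _ (hφ (n + 1))

theorem tendsto_runningMin {x : X} {a : ℝ} (hle : ∀ n, a ≤ φ n x)
    (hlt : ∀ b > a, ∃ n, φ n x < b) : Tendsto (fun n => runningMin φ n x) atTop (𝓝 a) := by
  refine tendsto_order.2 ⟨fun c hc => Eventually.of_forall fun n => ?_, fun b hb => ?_⟩
  · exact hc.trans_le (le_runningMin hle n)
  · obtain ⟨n, hn⟩ := hlt b hb
    filter_upwards [eventually_ge_atTop n] with m hm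
    exact ((antitone_runningMin φ x hm).trans (runningMin_le φ n x)).trans_lt hn

end RunningMin

section Envelope

variable {X : Type*} {C : Set (X → ℝ)} {f : X → ℝ}

noncomputable def envelope (C : Set (X → ℝ)) (f : X → ℝ) (x : X) : ℝ :=
  sInf {y : ℝ | ∃ g ∈ C, (∀ z, f z ≤ g z) ∧ y = g x}

theorem bddBelow_envelope_set (x : X) :
    BddBelow {y : ℝ | ∃ g ∈ C, (∀ z, f z ≤ g z) ∧ y = g x} :=
  ⟨f x, by rintro y ⟨g, -, hfg, rfl⟩; exact hfg x⟩

theorem envelope_le {g : X → ℝ} (hg : g ∈ C) (hfg : f ≤ g) (x : X) : envelope C f x ≤ g x :=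
  csInf_le (bddBelow_envelope_set x) ⟨g, hg, hfg, rfl⟩

theorem le_envelope (hne : ∃ g ∈ C, f ≤ g) (x : X) : f x ≤ envelope C f x := by
  obtain ⟨g, hg, hfg⟩ := hne
  refine le_csInf ⟨g x, g, hg, hfg, rfl⟩ ?_
  rintro y ⟨g, -, hfg, rfl⟩
  exact hfg x

theorem exists_lt_of_envelope_lt (hne : ∃ g ∈ C, f ≤ g) {x : X} {b : ℝ}
    (hb : envelope C f x < b) : ∃ g ∈ C, f ≤ g ∧ g x < b := by
  obtain ⟨g, hg, hfg⟩ := hne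
  obtain ⟨y, ⟨g, hg, hfg, rfl⟩, hy⟩ :=
    exists_lt_of_csInf_lt (by exact ⟨g x, g, hg, hfg, rfl⟩) hb
  exact ⟨g, hg, hfg, hy⟩

theorem abs_envelope_le (hconst : ∀ c : ℝ, (fun _ : X => c) ∈ C) {M : ℝ}
    (hM : ∀ x, |f x| ≤ M) (x : X) : |envelope C f x| ≤ M := by
  have hfM : f ≤ fun _ => M := fun z => (abs_le.1 (hM z)).2
  exact abs_le.2 ⟨(abs_le.1 (hM x)).1.trans (le_envelope ⟨_, hconst M, hfM⟩ x),
    envelope_le (hconst M) hfM x⟩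

theorem exists_continuous_ge_lt [TopologicalSpace X]
    (happrox : ∀ g ∈ C, ∃ gn : ℕ → X → ℝ,
      (∀ n, gn n ∈ C ∧ Continuous (gn n)) ∧
      (∀ n x, gn (n + 1) x ≤ gn n x) ∧
      (∀ x, Tendsto (fun n => gn n x) atTop (𝓝 (g x))))
    {g : X → ℝ} (hg : g ∈ C) {x : X} {b : ℝ} (hb : g x < b) :
    ∃ h : C(X, ℝ), ⇑h ∈ C ∧ g ≤ h ∧ h x < b := by
  obtain ⟨gn, hgn, hanti, hlim⟩ := happrox g hg
  have hge : ∀ n, g ≤ gn n := fun n z =>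
    (antitone_nat_of_succ_le fun k => hanti k z).le_of_tendsto (hlim z) n
  obtain ⟨n, hn⟩ := ((hlim x).eventually (gt_mem_nhds hb)).exists
  exact ⟨⟨gn n, (hgn n).2⟩, (hgn n).1, hge n, hn⟩

theorem exists_seq_approx_envelope [MetricSpace X] [CompactSpace X]
    (happrox : ∀ g ∈ C, ∃ gn : ℕ → X → ℝ,
      (∀ n, gn n ∈ C ∧ Continuous (gn n)) ∧
      (∀ n x, gn (n + 1) x ≤ gn n x) ∧
      (∀ x, Tendsto (fun n => gn n x) atTop (𝓝 (g x))))
    (hS : ∃ h : C(X, ℝ), ⇑h ∈ C ∧ f ≤ h) :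
    ∃ φ : ℕ → X → ℝ, (∀ n, φ n ∈ C) ∧ (∀ n, f ≤ φ n) ∧
      ∀ x, ∀ b > envelope C f x, ∃ n, φ n x < b := by
  obtain ⟨h₀, hh₀⟩ := hS
  have hne : ∃ g ∈ C, f ≤ g := ⟨h₀, hh₀⟩
  let S : Set C(X, ℝ) := {h | ⇑h ∈ C ∧ f ≤ h}
  have : Nonempty S := ⟨⟨h₀, hh₀⟩⟩
  obtain ⟨u, hu⟩ := TopologicalSpace.exists_dense_seq S
  refine ⟨fun n => (u n : C(X, ℝ)), fun n => (u n).2.1, fun n => (u n).2.2, fun x b hb => ?_⟩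
  obtain ⟨g, hg, hfg, hgx⟩ := exists_lt_of_envelope_lt hne hb
  obtain ⟨h, hhC, hgh, hhx⟩ := exists_continuous_ge_lt happrox hg hgx
  obtain ⟨n, hn⟩ := hu.exists_dist_lt ⟨h, hhC, hfg.trans hgh⟩ (sub_pos.2 hhx)
  have hdist : dist (h x) ((u n : C(X, ℝ)) x) < b - h x :=
    (ContinuousMap.dist_apply_le_dist x).trans_lt hn
  rw [Real.dist_eq, abs_sub_lt_iff] at hdist
  exact ⟨n, by linarith⟩

end Envelope

theorem stmt_0_general {X : Type*} [MetricSpace X] [CompactSpace X]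
    (C : Set (X → ℝ))
    (hconst : ∀ c : ℝ, (fun _ : X => c) ∈ C)
    (hmin : ∀ g₁ ∈ C, ∀ g₂ ∈ C, (fun x => min (g₁ x) (g₂ x)) ∈ C)
    (happrox : ∀ g ∈ C, ∃ gn : ℕ → X → ℝ,
      (∀ n, gn n ∈ C ∧ Continuous (gn n)) ∧
      (∀ n x, gn (n + 1) x ≤ gn n x) ∧
      (∀ x, Tendsto (fun n => gn n x) atTop (nhds (g x))))
    (hlim : ∀ gn : ℕ → X → ℝ, (∀ n, gn n ∈ C) →
      (∀ n x, gn (n + 1) x ≤ gn n x) →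
      ∀ g : X → ℝ, (∃ M : ℝ, ∀ x, |g x| ≤ M) →
      (∀ x, Tendsto (fun n => gn n x) atTop (nhds (g x))) → g ∈ C)
    (f : X → ℝ) (hfb : ∃ M : ℝ, ∀ x, |f x| ≤ M) :
    (fun x => sInf {y : ℝ | ∃ g ∈ C, (∀ z, f z ≤ g z) ∧ y = g x}) ∈ C := by
  obtain ⟨M, hM⟩ := hfb
  obtain ⟨φ, hφC, hfφ, hφ⟩ := exists_seq_approx_envelope happrox
    ⟨ContinuousMap.const X M, hconst M, fun z => (abs_le.1 (hM z)).2⟩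
  refine hlim (runningMin φ) (runningMin_mem hmin hφC) (runningMin_succ_le φ) (envelope C f)
    ⟨M, abs_envelope_le hconst hM⟩ fun x => tendsto_runningMin (fun n => ?_) (hφ x)
  exact envelope_le (hφC n) (hfφ n) x

/-- If `C` is a convex cone of bounded upper semicontinuous functions on a
compact metric space `X` that contains all constants, is min-closed, admits decreasing
continuous approximations from above, and is closed under bounded decreasing pointwise
limits, then the `C`-envelope of any bounded upper semicontinuous `f` belongs to `C`. -/
theorem stmt_0 {X : Type*} [MetricSpace X] [CompactSpace X]
    (C : Set (X → ℝ))
    (hadd : ∀ g₁ ∈ C, ∀ g₂ ∈ C, g₁ + g₂ ∈ C)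
    (hsmul : ∀ c : ℝ, 0 ≤ c → ∀ g ∈ C, c • g ∈ C)
    (hbdd : ∀ g ∈ C, ∃ M : ℝ, ∀ x, |g x| ≤ M)
    (husc : ∀ g ∈ C, UpperSemicontinuous g)
    (hconst : ∀ c : ℝ, (fun _ : X => c) ∈ C)
    (hmin : ∀ g₁ ∈ C, ∀ g₂ ∈ C, (fun x => min (g₁ x) (g₂ x)) ∈ C)
    (happrox : ∀ g ∈ C, ∃ gn : ℕ → X → ℝ,
      (∀ n, gn n ∈ C ∧ Continuous (gn n)) ∧
      (∀ n x, gn (n + 1) x ≤ gn n x) ∧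
      (∀ x, Tendsto (fun n => gn n x) atTop (nhds (g x))))
    (hlim : ∀ gn : ℕ → X → ℝ, (∀ n, gn n ∈ C) →
      (∀ n x, gn (n + 1) x ≤ gn n x) →
      ∀ g : X → ℝ, (∃ M : ℝ, ∀ x, |g x| ≤ M) →
      (∀ x, Tendsto (fun n => gn n x) atTop (nhds (g x))) → g ∈ C)
    (f : X → ℝ) (hf : UpperSemicontinuous f) (hfb : ∃ M : ℝ, ∀ x, |f x| ≤ M) :
    (fun x => sInf {y : ℝ | ∃ g ∈ C, (∀ z, f z ≤ g z) ∧ y = g x}) ∈ C :=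
  stmt_0_general C hconst hmin happrox hlim f hfb
end

section
/- For any probability measure μ on a compact Polish space X and any cone C of test functions defining an integral stochastic order ⪯_C, the orbit K_μ := {ν ∈ Δ(X) : ν ⪯_C μ} is closed in the weak-* topology of Δ(X), and hence compact. -/
/-!
Testing against the continuous members of `C` is a weak-* closed condition, being an
intersection of preimages of closed half-lines under the continuous maps `ν ↦ ∫ g dν`. It already
implies the condition for every `g ∈ C`: approximate `g` by a decreasing sequence of continuous
members of `C` and pass to the limit on both sides by monotone convergence. Compactness follows
since `Δ(X)` is compact for compact `X`.
-/

open MeasureTheory Filter Topology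

section

variable {X : Type*} [TopologicalSpace X] [CompactSpace X] [MeasurableSpace X]
  [OpensMeasurableSpace X]

lemma integral_le_of_antitone_continuous_approx {ν μ : Measure X} [IsFiniteMeasure ν]
    [IsFiniteMeasure μ] {g : X → ℝ} (hgν : Integrable g ν) (hgμ : Integrable g μ)
    {gn : ℕ → X → ℝ} (hgn : ∀ n, Continuous (gn n)) (hanti : ∀ n x, gn (n + 1) x ≤ gn n x)
    (hlim : ∀ x, Tendsto (fun n => gn n x) atTop (𝓝 (g x)))
    (hle : ∀ n, ∫ x, gn n x ∂ν ≤ ∫ x, gn n x ∂μ) :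
    ∫ x, g x ∂ν ≤ ∫ x, g x ∂μ := by
  have hanti' : ∀ x, Antitone fun n => gn n x := fun x => antitone_nat_of_succ_le (hanti · x)
  have tendsto_integral : ∀ (ρ : Measure X) [IsFiniteMeasure ρ], Integrable g ρ →
      Tendsto (fun n => ∫ x, gn n x ∂ρ) atTop (𝓝 (∫ x, g x ∂ρ)) := fun ρ _ hg =>
    integral_tendsto_of_tendsto_of_antitone
      (fun n => (hgn n).integrable_of_hasCompactSupport (.of_compactSpace _)) hg
      (ae_of_all _ hanti') (ae_of_all _ hlim)
  exact le_of_tendsto_of_tendsto' (tendsto_integral ν hgν) (tendsto_integral μ hgμ) hle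

lemma ProbabilityMeasure.isClosed_setOf_forall_integral_le (D : Set C(X, ℝ)) (μ : Measure X) :
    IsClosed {ν : ProbabilityMeasure X | ∀ g ∈ D, ∫ x, g x ∂(ν : Measure X) ≤ ∫ x, g x ∂μ} := by
  simp only [Set.ofPred_forall]
  exact isClosed_biInter fun g _ =>
    isClosed_le (ProbabilityMeasure.continuous_integral_continuousMap g) continuous_const

end

theorem stmt_2_general {X : Type*} [MetricSpace X] [CompactSpace X]
    [MeasurableSpace X] [BorelSpace X]
    (C : Set (X → ℝ))
    (hbdd : ∀ g ∈ C, ∃ M : ℝ, ∀ x, |g x| ≤ M)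
    (husc : ∀ g ∈ C, UpperSemicontinuous g)
    (happrox : ∀ g ∈ C, ∃ gn : ℕ → X → ℝ,
      (∀ n, gn n ∈ C ∧ Continuous (gn n)) ∧
      (∀ n x, gn (n + 1) x ≤ gn n x) ∧
      (∀ x, Tendsto (fun n => gn n x) atTop (nhds (g x))))
    (μ : ProbabilityMeasure X) :
    IsClosed {ν : ProbabilityMeasure X |
        ∀ g ∈ C, ∫ x, g x ∂(ν : Measure X) ≤ ∫ x, g x ∂(μ : Measure X)} ∧
    IsCompact {ν : ProbabilityMeasure X |
        ∀ g ∈ C, ∫ x, g x ∂(ν : Measure X) ≤ ∫ x, g x ∂(μ : Measure X)} := by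
  have hint : ∀ g ∈ C, ∀ (ρ : Measure X) [IsFiniteMeasure ρ], Integrable g ρ := fun g hg ρ _ =>
    let ⟨M, hM⟩ := hbdd g hg
    .of_bound (husc g hg).measurable.aestronglyMeasurable M (ae_of_all _ hM)
  have hK : {ν : ProbabilityMeasure X |
        ∀ g ∈ C, ∫ x, g x ∂(ν : Measure X) ≤ ∫ x, g x ∂(μ : Measure X)} =
      {ν : ProbabilityMeasure X | ∀ g ∈ {g : C(X, ℝ) | ⇑g ∈ C},
        ∫ x, g x ∂(ν : Measure X) ≤ ∫ x, g x ∂(μ : Measure X)} := by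
    ext ν
    refine ⟨fun hν g hg => hν g hg, fun hν g hg => ?_⟩
    obtain ⟨gn, hgn, hanti, hlim⟩ := happrox g hg
    exact integral_le_of_antitone_continuous_approx (hint g hg _) (hint g hg _)
      (fun n => (hgn n).2) hanti hlim fun n => hν ⟨gn n, (hgn n).2⟩ (hgn n).1
  have hclosed := hK ▸ ProbabilityMeasure.isClosed_setOf_forall_integral_le _ (μ : Measure X)
  exact ⟨hclosed, hclosed.isCompact⟩

/-- For any probability measure `μ` on a compact Polish space `X` and any
cone `C` of test functions defining an integral stochastic order, the orbit
`K_μ = {ν : ν ⪯_C μ}` is closed in the weak-* topology of `Δ(X)`, hence compact. -/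
theorem stmt_2 {X : Type*} [MetricSpace X] [CompactSpace X] [SecondCountableTopology X]
    [MeasurableSpace X] [BorelSpace X]
    (C : Set (X → ℝ))
    (hbdd : ∀ g ∈ C, ∃ M : ℝ, ∀ x, |g x| ≤ M)
    (husc : ∀ g ∈ C, UpperSemicontinuous g)
    (happrox : ∀ g ∈ C, ∃ gn : ℕ → X → ℝ,
      (∀ n, gn n ∈ C ∧ Continuous (gn n)) ∧
      (∀ n x, gn (n + 1) x ≤ gn n x) ∧
      (∀ x, Tendsto (fun n => gn n x) atTop (nhds (g x))))
    (μ : ProbabilityMeasure X) :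
    IsClosed {ν : ProbabilityMeasure X |
        ∀ g ∈ C, ∫ x, g x ∂(ν : Measure X) ≤ ∫ x, g x ∂(μ : Measure X)} ∧
    IsCompact {ν : ProbabilityMeasure X |
        ∀ g ∈ C, ∫ x, g x ∂(ν : Measure X) ≤ ∫ x, g x ∂(μ : Measure X)} :=
  stmt_2_general C hbdd husc happrox μ
end

section
/- Let C be a convex cone of functions on X. If ν is an extreme point of K_μ = {ν : ν ⪯_C μ} and ν = P1*μ = P2*μ for two order-preserving kernels P1, P2 (P_i*δ_x ⪯_C δ_x μ-a.e.), then P1(·|x) = P2(·|x) for μ-almost every x. (Unique rationalization of extreme points.) -/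
/-!
Fix a measurable `B` and swap `P₁` and `P₂` on `A = {x | P₂(B|x) < P₁(B|x)}`. The two swapped
kernels are still order-preserving, so they push `μ` into `K_μ`, and the two images average to
`ν`. Extremality makes the first image equal to `ν`; evaluated at `B` this says
`∫ max (P₁(B|x)) (P₂(B|x)) dμ = ∫ P₂(B|x) dμ`, so `P₁(B|·) ≤ P₂(B|·)` a.e., and by symmetry
equality holds. Agreement on every `B` gives `μ ⊗ P₁ = μ ⊗ P₂`, which determines the kernel
`μ`-a.e. because the Borel σ-algebra is countably generated.
-/

open MeasureTheory ProbabilityTheory Filter Topology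

/-- The orbit `K_μ = {ν ∈ Δ(X) : ν ⪯_C μ}`. -/
def orbit {X : Type*} [MeasurableSpace X] (C : Set (X → ℝ)) (μ : Measure X) :
    Set (Measure X) :=
  {ν | IsProbabilityMeasure ν ∧ ∀ g ∈ C, ∫ x, g x ∂ν ≤ ∫ x, g x ∂μ}

/-- Convex combination `t•μ + (1-t)•ν` of measures. -/
noncomputable def mix {X : Type*} [MeasurableSpace X] (t : ℝ) (μ ν : Measure X) :
    Measure X :=
  ENNReal.ofReal t • μ + ENNReal.ofReal (1 - t) • ν

/-- `μ` is an extreme point of the set `S` of measures. -/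
def IsExtremeIn {X : Type*} [MeasurableSpace X] (S : Set (Measure X)) (μ : Measure X) :
    Prop :=
  μ ∈ S ∧ ∀ t ∈ Set.Ioo (0 : ℝ) 1, ∀ μ₁ ∈ S, ∀ μ₂ ∈ S,
    μ = mix t μ₁ μ₂ → μ₁ = μ ∧ μ₂ = μ

open scoped ENNReal

section Kernels

variable {α β : Type*} {mα : MeasurableSpace α} {mβ : MeasurableSpace β}
  {μ : Measure α} {κ η : Kernel α β}

lemma MeasureTheory.Measure.integral_comp_eq_integral_integral [SFinite μ] [IsSFiniteKernel κ]
    {f : β → ℝ} (hf : Integrable f (κ ∘ₘ μ)) :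
    ∫ y, f y ∂(κ ∘ₘ μ) = ∫ x, ∫ y, f y ∂(κ x) ∂μ := by
  rw [Measure.comp_eq_comp_const_apply] at hf ⊢
  rw [Kernel.integral_comp hf, Kernel.const_apply]

lemma MeasureTheory.Integrable.integral_kernel_of_comp [SFinite μ] [IsSFiniteKernel κ]
    {f : β → ℝ} (hf : Integrable f (κ ∘ₘ μ)) :
    Integrable (fun x ↦ ∫ y, f y ∂(κ x)) μ := by
  rw [Measure.comp_eq_comp_const_apply] at hf
  simpa using hf.integral_comp

lemma ProbabilityTheory.Kernel.piecewise_add_piecewise {s : Set α} (hs : MeasurableSet s)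
    [DecidablePred (· ∈ s)] : piecewise hs κ η + piecewise hs η κ = κ + η := by
  ext x : 1
  simp only [FunLike.coe_add, Pi.add_apply, Kernel.piecewise_apply]
  split_ifs
  · rfl
  · exact add_comm _ _

lemma ProbabilityTheory.Kernel.piecewise_setOf_lt_apply {t : Set β}
    (hs : MeasurableSet {x | η x t < κ x t}) (x : α) :
    piecewise hs κ η x t = max (κ x t) (η x t) := by
  rw [Kernel.piecewise_apply']
  split_ifs with h
  · exact (max_eq_left h.le).symm
  · exact (max_eq_right (not_lt.mp h)).symm

lemma ProbabilityTheory.Kernel.ae_apply_eq_of_le_of_comp_eq [IsFiniteMeasure μ] [IsFiniteKernel η]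
    {t : Set β} (ht : MeasurableSet t) (hle : ∀ x, η x t ≤ κ x t) (h : κ ∘ₘ μ = η ∘ₘ μ) :
    ∀ᵐ x ∂μ, κ x t = η x t := by
  have hcomp (ρ : Kernel α β) : (ρ ∘ₘ μ) t = ∫⁻ x, ρ x t ∂μ :=
    Measure.bind_apply ht ρ.aemeasurable
  refine (ae_eq_of_ae_le_of_lintegral_le (ae_of_all _ hle) ?_
    (κ.measurable_coe ht).aemeasurable ?_).symm
  · rw [← hcomp]
    exact measure_ne_top _ _
  · rw [← hcomp, ← hcomp, h]

lemma ProbabilityTheory.Kernel.ae_eq_of_forall_ae_apply_eq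
    [MeasurableSpace.CountableOrCountablyGenerated α β] [IsFiniteMeasure μ] [IsFiniteKernel κ]
    [IsFiniteKernel η] (h : ∀ t, MeasurableSet t → ∀ᵐ x ∂μ, κ x t = η x t) : κ =ᵐ[μ] η := by
  refine Kernel.ae_eq_of_compProd_eq <| Measure.ext_prod fun hs ht => ?_
  rw [Measure.compProd_apply_prod hs ht, Measure.compProd_apply_prod hs ht]
  exact lintegral_congr_ae (ae_restrict_of_ae (h _ ht))

end Kernels

lemma mix_half_eq_of_add_eq {X : Type*} [MeasurableSpace X] {ρ₁ ρ₂ ν : Measure X}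
    (h : ρ₁ + ρ₂ = ν + ν) : mix (1 / 2) ρ₁ ρ₂ = ν := by
  have half : ENNReal.ofReal (1 / 2) = 2⁻¹ := by
    rw [ENNReal.ofReal_div_of_pos two_pos]
    simp
  rw [mix, show (1 : ℝ) - 1 / 2 = 1 / 2 by norm_num, half, ← smul_add, h, ← two_smul ℝ≥0∞ ν,
    smul_smul, ENNReal.inv_mul_cancel two_ne_zero ENNReal.ofNat_ne_top, one_smul]

section OrderPreserving

variable {X : Type*} [MeasurableSpace X] {C : Set (X → ℝ)} {μ ν : Measure X}

/-- `P(·|x) ⪯_C δ_x` for `μ`-almost every `x`. -/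
def IsOrderPreserving (C : Set (X → ℝ)) (μ : Measure X) (P : Kernel X X) : Prop :=
  ∀ᵐ x ∂μ, ∀ g ∈ C, ∫ y, g y ∂(P x) ≤ g x

lemma IsOrderPreserving.piecewise {P R : Kernel X X} {A : Set X} (hA : MeasurableSet A)
    [DecidablePred (· ∈ A)] (hP : IsOrderPreserving C μ P) (hR : IsOrderPreserving C μ R) :
    IsOrderPreserving C μ (Kernel.piecewise hA P R) := by
  filter_upwards [hP, hR] with x hPx hRx
  rw [Kernel.piecewise_apply]
  split_ifs
  exacts [hPx, hRx]

lemma integral_comp_le_of_isOrderPreserving [SFinite μ] {P : Kernel X X}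
    [IsSFiniteKernel P] (hP : IsOrderPreserving C μ P) {g : X → ℝ} (hgC : g ∈ C)
    (hg : Integrable g (P ∘ₘ μ)) (hgμ : Integrable g μ) :
    ∫ y, g y ∂(P ∘ₘ μ) ≤ ∫ x, g x ∂μ := by
  rw [Measure.integral_comp_eq_integral_integral hg]
  exact integral_mono_ae hg.integral_kernel_of_comp hgμ (hP.mono fun x hx => hx g hgC)

lemma comp_mem_orbit (hC : ∀ g ∈ C, Measurable g ∧ ∃ M : ℝ, ∀ x, |g x| ≤ M)
    [IsProbabilityMeasure μ] {P : Kernel X X} [IsMarkovKernel P] (hP : IsOrderPreserving C μ P) :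
    P ∘ₘ μ ∈ orbit C μ := by
  refine ⟨inferInstance, fun g hgC => ?_⟩
  obtain ⟨hg, M, hM⟩ := hC g hgC
  have hint (ρ : Measure X) [IsFiniteMeasure ρ] : Integrable g ρ :=
    .of_bound hg.aestronglyMeasurable M (ae_of_all _ fun x => (Real.norm_eq_abs _).trans_le (hM x))
  exact integral_comp_le_of_isOrderPreserving hP hgC (hint _) (hint _)

lemma IsExtremeIn.ae_apply_le_of_comp_eq (hC : ∀ g ∈ C, Measurable g ∧ ∃ M : ℝ, ∀ x, |g x| ≤ M)
    [IsProbabilityMeasure μ] (hext : IsExtremeIn (orbit C μ) ν)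
    {P₁ P₂ : Kernel X X} [IsMarkovKernel P₁] [IsMarkovKernel P₂]
    (h₁ : ν = P₁ ∘ₘ μ) (h₂ : ν = P₂ ∘ₘ μ)
    (hP₁ : IsOrderPreserving C μ P₁) (hP₂ : IsOrderPreserving C μ P₂)
    {B : Set X} (hB : MeasurableSet B) : ∀ᵐ x ∂μ, P₁ x B ≤ P₂ x B := by
  have hA : MeasurableSet {x | P₂ x B < P₁ x B} :=
    measurableSet_lt (P₂.measurable_coe hB) (P₁.measurable_coe hB)
  classical
  set Q₁ := Kernel.piecewise hA P₁ P₂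
  set Q₂ := Kernel.piecewise hA P₂ P₁
  have hsum : Q₁ ∘ₘ μ + Q₂ ∘ₘ μ = ν + ν := by
    rw [← Measure.add_comp, Kernel.piecewise_add_piecewise, Measure.add_comp, ← h₁, ← h₂]
  have hQ₁ : Q₁ ∘ₘ μ = ν :=
    (hext.2 (1 / 2) ⟨by norm_num, by norm_num⟩ _ (comp_mem_orbit hC (hP₁.piecewise hA hP₂))
      _ (comp_mem_orbit hC (hP₂.piecewise hA hP₁)) (mix_half_eq_of_add_eq hsum).symm).1
  have hmax : ∀ᵐ x ∂μ, Q₁ x B = P₂ x B :=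
    Kernel.ae_apply_eq_of_le_of_comp_eq hB
      (fun x => (Kernel.piecewise_setOf_lt_apply hA x).symm ▸ le_max_right _ _) (hQ₁.trans h₂)
  filter_upwards [hmax] with x hx
  rw [← hx, Kernel.piecewise_setOf_lt_apply hA x]
  exact le_max_left _ _

end OrderPreserving

theorem stmt_8_general {X : Type*} [MetricSpace X] [SecondCountableTopology X]
    [MeasurableSpace X] [BorelSpace X]
    (C : Set (X → ℝ))
    (hC : ∀ g ∈ C, Measurable g ∧ ∃ M : ℝ, ∀ x, |g x| ≤ M)
    (μ ν : Measure X) [IsProbabilityMeasure μ]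
    (hext : IsExtremeIn (orbit C μ) ν)
    (P₁ P₂ : Kernel X X) [IsMarkovKernel P₁] [IsMarkovKernel P₂]
    (h₁ : ν = μ.bind (fun x => P₁ x))
    (h₂ : ν = μ.bind (fun x => P₂ x))
    (hop₁ : ∀ᵐ x ∂μ, ∀ g ∈ C, ∫ y, g y ∂(P₁ x) ≤ g x)
    (hop₂ : ∀ᵐ x ∂μ, ∀ g ∈ C, ∫ y, g y ∂(P₂ x) ≤ g x) :
    ∀ᵐ x ∂μ, P₁ x = P₂ x := by
  refine Kernel.ae_eq_of_forall_ae_apply_eq fun B hB => ?_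
  filter_upwards [hext.ae_apply_le_of_comp_eq hC h₁ h₂ hop₁ hop₂ hB,
    hext.ae_apply_le_of_comp_eq hC h₂ h₁ hop₂ hop₁ hB] with x h₁₂ h₂₁
  exact le_antisymm h₁₂ h₂₁

/-- Unique rationalization of extreme points: if `ν` is an extreme point of
the orbit `K_μ` and `ν = P₁*μ = P₂*μ` for two order-preserving kernels, then
`P₁(·|x) = P₂(·|x)` for μ-almost every `x`. -/
theorem stmt_8 {X : Type*} [MetricSpace X] [CompactSpace X] [SecondCountableTopology X]
    [MeasurableSpace X] [BorelSpace X]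
    (C : Set (X → ℝ))
    (hadd : ∀ g₁ ∈ C, ∀ g₂ ∈ C, g₁ + g₂ ∈ C)
    (hsmul : ∀ c : ℝ, 0 ≤ c → ∀ g ∈ C, c • g ∈ C)
    (hC : ∀ g ∈ C, Measurable g ∧ ∃ M : ℝ, ∀ x, |g x| ≤ M)
    (hmin : ∀ g₁ ∈ C, ∀ g₂ ∈ C, (fun x => min (g₁ x) (g₂ x)) ∈ C)
    (μ ν : Measure X) [IsProbabilityMeasure μ] [IsProbabilityMeasure ν]
    (hext : IsExtremeIn (orbit C μ) ν)
    (P₁ P₂ : Kernel X X) [IsMarkovKernel P₁] [IsMarkovKernel P₂]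
    (h₁ : ν = μ.bind (fun x => P₁ x))
    (h₂ : ν = μ.bind (fun x => P₂ x))
    (hop₁ : ∀ᵐ x ∂μ, ∀ g ∈ C, ∫ y, g y ∂(P₁ x) ≤ g x)
    (hop₂ : ∀ᵐ x ∂μ, ∀ g ∈ C, ∫ y, g y ∂(P₂ x) ≤ g x) :
    ∀ᵐ x ∂μ, P₁ x = P₂ x :=
  stmt_8_general C hC μ ν hext P₁ P₂ h₁ h₂ hop₁ hop₂
end

section
/- Let f: X → ℝ on a compact convex X ⊂ ℝⁿ be continuous, let f̄ be its concave envelope, and let h be a supporting affine function of f̄ at a point x where f̄ is differentiable. Define R_h := {y ∈ X : f̄(y) = h(y)} and T_h := {y ∈ X : f(y) = h(y)}. Then R_h is convex, T_h ⊆ R_h, and R_h = conv(T_h). -/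
/-!
Since `f̄` is concave and differentiable at `x`, its tangent plane `h` majorizes `f̄`, hence `f`, on
`X`. A concave function lying below an affine one touches it on a convex set, so `R_h` is convex,
and `T_h ⊆ R_h` because `f ≤ f̄ ≤ h`.

For `R_h ⊆ conv T_h`: the convex hull `C` of the graph of `f` is compact, so
`F z = max {t | (z, t) ∈ C}` is a concave majorant of `f`, whence `f̄ ≤ F`. For `z ∈ R_h`, write
`(z, F z)` as a convex combination of graph points `(yᵢ, f yᵢ)`. The affine function
`(y, t) ↦ h y - t` is nonnegative on the graph and nonpositive at `(z, F z)`, so it vanishes at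
every `yᵢ` carrying positive weight; these `yᵢ` lie in `T_h`.
-/

/-- The concave envelope of `f` over the set `X`: the pointwise infimum of all concave
functions on `X` dominating `f` on `X`. -/
noncomputable def concEnv {n : ℕ} (X : Set (EuclideanSpace ℝ (Fin n)))
    (f : EuclideanSpace ℝ (Fin n) → ℝ) : EuclideanSpace ℝ (Fin n) → ℝ :=
  fun z => sInf {y : ℝ | ∃ g : EuclideanSpace ℝ (Fin n) → ℝ,
    ConcaveOn ℝ X g ∧ (∀ w ∈ X, f w ≤ g w) ∧ y = g z}

theorem IsCompact.convexHull {E : Type*} [NormedAddCommGroup E] [NormedSpace ℝ E]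
    [FiniteDimensional ℝ E] {s : Set E} (hs : IsCompact s) : IsCompact (convexHull ℝ s) := by
  -- Carathéodory: a point of the hull is a convex combination of at most `finrank + 1` points.
  have hull_eq : _root_.convexHull ℝ s = ⋃ k : Fin (Module.finrank ℝ E + 2),
      (fun wp : (Fin k → ℝ) × (Fin k → E) => ∑ i, wp.1 i • wp.2 i) ''
        (stdSimplex ℝ (Fin k) ×ˢ Set.univ.pi fun _ => s) := by
    refine subset_antisymm (fun x hx => ?_) (Set.iUnion_subset fun k => ?_)
    · obtain ⟨ι, _, z, w, hzs, hz, hw₀, hw₁, rfl⟩ := eq_pos_convex_span_of_mem_convexHull hx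
      have hcard : Fintype.card ι < Module.finrank ℝ E + 2 :=
        Nat.lt_succ_of_le (hz.card_le_finrank_succ.trans (by gcongr; exact Submodule.finrank_le _))
      let e := Fintype.equivFin ι
      refine Set.mem_iUnion.2 ⟨⟨_, hcard⟩, (w ∘ e.symm, z ∘ e.symm), ⟨⟨fun i => (hw₀ _).le, ?_⟩,
        fun i _ => hzs ⟨_, rfl⟩⟩, ?_⟩
      · simpa [e.symm.sum_comp w] using hw₁
      · exact e.symm.sum_comp (fun i => w i • z i)
    · rintro _ ⟨⟨w, p⟩, ⟨⟨hw₀, hw₁⟩, hp⟩, rfl⟩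
      exact mem_convexHull_of_exists_fintype w p hw₀ hw₁ (fun i => hp i trivial) rfl
  rw [hull_eq]
  exact isCompact_iUnion fun k =>
    ((isCompact_stdSimplex _ _).prod (isCompact_univ_pi fun _ => hs)).image (by fun_prop)

theorem ConcaveOn.le_add_fderiv {E : Type*} [NormedAddCommGroup E] [NormedSpace ℝ E]
    {s : Set E} {φ : E → ℝ} {φ' : E →L[ℝ] ℝ} {x y : E} (hφ : ConcaveOn ℝ s φ) (hx : x ∈ s)
    (hy : y ∈ s) (hφ' : HasFDerivAt φ φ' x) : φ y ≤ φ x + φ' (y - x) := by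
  let ℓ : ℝ →ᵃ[ℝ] E := AffineMap.lineMap x y
  have hderiv : HasDerivAt (φ ∘ ℓ) (φ' (y - x)) 0 := by
    refine HasFDerivAt.comp_hasDerivAt (0 : ℝ) ?_ AffineMap.hasDerivAt_lineMap
    simpa [ℓ] using hφ'
  have hslope : slope (φ ∘ ℓ) 0 1 ≤ φ' (y - x) :=
    (hφ.comp_affineMap ℓ).slope_le_of_hasDerivAt (by simpa [ℓ]) (by simpa [ℓ]) one_pos hderiv
  have hsecant : slope (φ ∘ ℓ) 0 1 = φ y - φ x := by simp [slope_def_field, ℓ]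
  linarith

theorem ConcaveOn.convex_setOf_eq_of_le {E : Type*} [AddCommGroup E] [Module ℝ E]
    {s : Set E} {φ : E → ℝ} {ψ : E →ᵃ[ℝ] ℝ} (hφ : ConcaveOn ℝ s φ) (hle : ∀ y ∈ s, φ y ≤ ψ y) :
    Convex ℝ {y ∈ s | φ y = ψ y} := by
  rintro a ⟨ha, hφa⟩ b ⟨hb, hφb⟩ ta tb hta htb hab
  have hmem := hφ.1 ha hb hta htb hab
  refine ⟨hmem, (hle _ hmem).antisymm ?_⟩
  calc ψ (ta • a + tb • b) = ta • φ a + tb • φ b := by rw [Convex.combo_affine_apply hab, hφa, hφb]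
    _ ≤ φ (ta • a + tb • b) := hφ.2 ha hb hta htb hab

theorem mem_convexHull_setOf_eq_zero {E : Type*} [AddCommGroup E] [Module ℝ E] {S : Set E}
    {ψ : E → ℝ} (hψ : ConcaveOn ℝ (convexHull ℝ S) ψ) (hS : ∀ q ∈ S, 0 ≤ ψ q) {p : E}
    (hp : p ∈ convexHull ℝ S) (hψp : ψ p ≤ 0) : p ∈ convexHull ℝ {q ∈ S | ψ q = 0} := by
  classical
  obtain ⟨ι, _, w, q, hw₀, hw₁, hqS, rfl⟩ := mem_convexHull_iff_exists_fintype.1 hp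
  have hterm : ∀ i ∈ Finset.univ, 0 ≤ w i • ψ (q i) := fun i _ => mul_nonneg (hw₀ i) (hS _ (hqS i))
  have hsum : ∑ i, w i • ψ (q i) = 0 :=
    le_antisymm (hψp.trans' <| hψ.le_map_sum (fun i _ => hw₀ i) hw₁ fun i _ =>
      subset_convexHull ℝ S (hqS i)) (Finset.sum_nonneg hterm)
  have hzero := (Finset.sum_eq_zero_iff_of_nonneg hterm).1 hsum
  rw [← Finset.sum_filter_of_ne (p := fun i => w i ≠ 0) fun i _ h => left_ne_zero_of_smul h]
  refine (convex_convexHull ℝ _).sum_mem (fun i _ => hw₀ i) ?_ fun i hi => subset_convexHull ℝ _ ?_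
  · rwa [Finset.sum_filter_ne_zero]
  · obtain ⟨-, hwi⟩ := Finset.mem_filter.1 hi
    exact ⟨hqS i, (smul_eq_zero.1 (hzero i (Finset.mem_univ i))).resolve_left hwi⟩

section Slice

variable {E : Type*} [TopologicalSpace E] {C : Set (E × ℝ)}

theorem IsCompact.bddAbove_slice (hC : IsCompact C) (z : E) : BddAbove {t | (z, t) ∈ C} :=
  (hC.image continuous_snd).bddAbove.mono fun _ ht => Set.mem_image_of_mem Prod.snd ht

theorem IsCompact.sSup_slice_mem [T2Space E] (hC : IsCompact C) {z : E} {t : ℝ} (ht : (z, t) ∈ C) :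
    (z, sSup {t | (z, t) ∈ C}) ∈ C :=
  (hC.isClosed.preimage (Continuous.prodMk_right z)).csSup_mem ⟨t, ht⟩ (hC.bddAbove_slice z)

theorem IsCompact.concaveOn_sSup_slice [T2Space E] [AddCommGroup E] [Module ℝ E] (hC : IsCompact C)
    (hCconv : Convex ℝ C) {s : Set E} (hs : Convex ℝ s) (hsC : ∀ z ∈ s, ∃ t, (z, t) ∈ C) :
    ConcaveOn ℝ s fun z => sSup {t | (z, t) ∈ C} := by
  refine ⟨hs, fun a ha b hb ta tb hta htb hab => le_csSup (hC.bddAbove_slice _) ?_⟩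
  obtain ⟨_, hta'⟩ := hsC a ha
  obtain ⟨_, htb'⟩ := hsC b hb
  simpa using hCconv (hC.sSup_slice_mem hta') (hC.sSup_slice_mem htb') hta htb hab

end Slice

section ConcaveEnvelope

variable {n : ℕ} {X : Set (EuclideanSpace ℝ (Fin n))} {f g : EuclideanSpace ℝ (Fin n) → ℝ}

theorem concEnv_le (hg : ConcaveOn ℝ X g) (hfg : ∀ w ∈ X, f w ≤ g w) {z} (hz : z ∈ X) :
    concEnv X f z ≤ g z :=
  csInf_le ⟨f z, by rintro _ ⟨g', -, hfg', rfl⟩; exact hfg' z hz⟩ ⟨g, hg, hfg, rfl⟩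

theorem le_concEnv_of_forall (hX : Convex ℝ X) (hf : BddAbove (f '' X)) {c : ℝ} {z}
    (hc : ∀ g, ConcaveOn ℝ X g → (∀ w ∈ X, f w ≤ g w) → c ≤ g z) : c ≤ concEnv X f z := by
  obtain ⟨M, hM⟩ := hf
  refine le_csInf ⟨M, fun _ => M, concaveOn_const M hX, fun w hw => hM ⟨w, hw, rfl⟩, rfl⟩ ?_
  rintro _ ⟨g, hg, hfg, rfl⟩
  exact hc g hg hfg

theorem le_concEnv (hX : Convex ℝ X) (hf : BddAbove (f '' X)) {z} (hz : z ∈ X) :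
    f z ≤ concEnv X f z :=
  le_concEnv_of_forall hX hf fun _ _ hfg => hfg z hz

theorem concaveOn_concEnv (hX : Convex ℝ X) (hf : BddAbove (f '' X)) :
    ConcaveOn ℝ X (concEnv X f) := by
  refine ⟨hX, fun a ha b hb ta tb hta htb hab => le_concEnv_of_forall hX hf fun g hg hfg => ?_⟩
  calc ta • concEnv X f a + tb • concEnv X f b ≤ ta • g a + tb • g b := by
        gcongr <;> exact concEnv_le hg hfg ‹_›
    _ ≤ g (ta • a + tb • b) := hg.2 ha hb hta htb hab

theorem exists_mem_convexHull_graph_concEnv_le (hXc : IsCompact X) (hX : Convex ℝ X)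
    (hf : ContinuousOn f X) {z} (hz : z ∈ X) :
    ∃ t, concEnv X f z ≤ t ∧ (z, t) ∈ convexHull ℝ ((fun w => (w, f w)) '' X) := by
  set C := convexHull ℝ ((fun w => (w, f w)) '' X)
  have hC : IsCompact C := (hXc.image_of_continuousOn (continuousOn_id.prodMk hf)).convexHull
  have hgraph : ∀ w ∈ X, (w, f w) ∈ C := fun w hw => subset_convexHull ℝ _ ⟨w, hw, rfl⟩
  refine ⟨_, concEnv_le ?_ (fun w hw => le_csSup (hC.bddAbove_slice w) (hgraph w hw)) hz,
    hC.sSup_slice_mem (hgraph z hz)⟩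
  exact hC.concaveOn_sSup_slice (convex_convexHull ℝ _) hX fun w hw => ⟨_, hgraph w hw⟩

end ConcaveEnvelope

theorem mem_convexHull_setOf_eq_of_mem_convexHull_graph {E : Type*} [AddCommGroup E]
    [Module ℝ E] {X : Set E} {f : E → ℝ} {H : E →ᵃ[ℝ] ℝ} (hfH : ∀ y ∈ X, f y ≤ H y) {z : E}
    {t : ℝ} (hzt : (z, t) ∈ convexHull ℝ ((fun w => (w, f w)) '' X)) (htH : H z ≤ t) :
    z ∈ convexHull ℝ {y ∈ X | f y = H y} := by
  let ψ : E × ℝ →ᵃ[ℝ] ℝ :=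
    H.comp (LinearMap.fst ℝ E ℝ).toAffineMap - (LinearMap.snd ℝ E ℝ).toAffineMap
  have hψ : ConcaveOn ℝ (convexHull ℝ ((fun w => (w, f w)) '' X)) ψ :=
    ⟨convex_convexHull ℝ _, fun _ _ _ _ _ _ _ _ hab => (Convex.combo_affine_apply hab).ge⟩
  have hcontact := mem_convexHull_setOf_eq_zero hψ
    (by rintro _ ⟨w, hw, rfl⟩; simpa [ψ] using hfH w hw) hzt (by simpa [ψ] using htH)
  have himg := (LinearMap.fst ℝ E ℝ).image_convexHull _ ▸ Set.mem_image_of_mem _ hcontact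
  refine convexHull_mono ?_ himg
  rintro _ ⟨_, ⟨⟨w, hw, rfl⟩, hψw⟩, rfl⟩
  exact ⟨hw, (sub_eq_zero.1 (by simpa [ψ] using hψw)).symm⟩

theorem stmt_12_general {n : ℕ} (X : Set (EuclideanSpace ℝ (Fin n)))
    (hXc : IsCompact X) (hXconv : Convex ℝ X)
    (f : EuclideanSpace ℝ (Fin n) → ℝ) (hfc : ContinuousOn f X)
    (x : EuclideanSpace ℝ (Fin n)) (hx : x ∈ interior X)
    (hdiff : DifferentiableAt ℝ (concEnv X f) x)
    (h : EuclideanSpace ℝ (Fin n) → ℝ)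
    (hh : h = fun y => concEnv X f x + fderiv ℝ (concEnv X f) x (y - x)) :
    Convex ℝ {y ∈ X | concEnv X f y = h y} ∧
    {y ∈ X | f y = h y} ⊆ {y ∈ X | concEnv X f y = h y} ∧
    {y ∈ X | concEnv X f y = h y} = convexHull ℝ {y ∈ X | f y = h y} := by
  have hbdd : BddAbove (f '' X) := (hXc.image_of_continuousOn hfc).bddAbove
  have hconc := concaveOn_concEnv hXconv hbdd
  set L := fderiv ℝ (concEnv X f) x
  obtain ⟨H, rfl⟩ : ∃ H : EuclideanSpace ℝ (Fin n) →ᵃ[ℝ] ℝ, ⇑H = h :=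
    ⟨L.toLinearMap.toAffineMap + AffineMap.const ℝ _ (concEnv X f x - L x), by
      rw [hh]; ext y; simp [map_sub, add_sub, add_comm]⟩
  have hle : ∀ y ∈ X, concEnv X f y ≤ H y := fun y hy => by
    rw [hh]; exact hconc.le_add_fderiv (interior_subset hx) hy hdiff.hasFDerivAt
  have hTR : {y ∈ X | f y = H y} ⊆ {y ∈ X | concEnv X f y = H y} := fun y ⟨hy, hfy⟩ =>
    ⟨hy, (hle y hy).antisymm (hfy ▸ le_concEnv hXconv hbdd hy)⟩
  have hRconv := hconc.convex_setOf_eq_of_le hle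
  refine ⟨hRconv, hTR, (convexHull_min hTR hRconv).antisymm' ?_⟩
  rintro z ⟨hz, hzR⟩
  obtain ⟨t, ht, hzt⟩ := exists_mem_convexHull_graph_concEnv_le hXc hXconv hfc hz
  exact mem_convexHull_setOf_eq_of_mem_convexHull_graph
    (fun y hy => (le_concEnv hXconv hbdd hy).trans (hle y hy)) hzt (hzR ▸ ht)

/-- For continuous `f` on a full-dimensional compact convex `X ⊆ ℝⁿ`, with
`f̄` its concave envelope and `h` the supporting affine function of `f̄` at a
differentiability point `x`, the sets `R_h := {y ∈ X : f̄(y) = h(y)}` and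
`T_h := {y ∈ X : f(y) = h(y)}` satisfy: `R_h` is convex, `T_h ⊆ R_h`, and
`R_h = conv(T_h)`. -/
theorem stmt_12 {n : ℕ} (X : Set (EuclideanSpace ℝ (Fin n)))
    (hXc : IsCompact X) (hXconv : Convex ℝ X) (hXfull : (interior X).Nonempty)
    (f : EuclideanSpace ℝ (Fin n) → ℝ) (hfc : ContinuousOn f X)
    (x : EuclideanSpace ℝ (Fin n)) (hx : x ∈ interior X)
    (hdiff : DifferentiableAt ℝ (concEnv X f) x)
    (h : EuclideanSpace ℝ (Fin n) → ℝ)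
    (hh : h = fun y => concEnv X f x + fderiv ℝ (concEnv X f) x (y - x)) :
    Convex ℝ {y ∈ X | concEnv X f y = h y} ∧
    {y ∈ X | f y = h y} ⊆ {y ∈ X | concEnv X f y = h y} ∧
    {y ∈ X | concEnv X f y = h y} = convexHull ℝ {y ∈ X | f y = h y} :=
  stmt_12_general X hXc hXconv f hfc x hx hdiff h hh
end

section
/- Let X be a compact convex metrizable subset of a locally convex Hausdorff topological vector space and Y a metric space. If f: X × Y → ℝ is bounded, lower semicontinuous, and x ↦ f(x,y) is convex for every y ∈ Y, then there exists an increasing sequence of continuous functions f_n: X × Y → ℝ with f_n ≤ f, f_n ↑ f pointwise, and x ↦ f_n(x,y) convex for every y and n. Each f_n can be taken to be a finite maximum of functions of the form a(x) + φ(y) with a continuous affine on X and φ continuous on Y. -/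
/-!
Fix a sequence `a k` of continuous affine maps that is dense, for uniform convergence on `X`, in
the set of all continuous affine maps (possible because `C(X, ℝ)` is separable). Each marginal
`m k y = ⨅ x ∈ X, (f x y - a k x)` is lower semicontinuous (Berge) and bounded below, hence the
supremum of its Lipschitz envelopes `φ k j`. By Fenchel–Moreau and density,
`f x y = ⨆ k, (a k x + m k y) = ⨆ k j, (a k x + φ k j y)`, and the partial maxima of an
enumeration of this doubly indexed family are the required approximants.
-/

open Filter Topology Set TopologicalSpace NNReal

theorem isLUB_of_forall_lt_exists_gt {α : Type*} [LinearOrder α] {s : Set α} {a : α}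
    (hub : a ∈ upperBounds s) (h : ∀ b < a, ∃ c ∈ s, b < c) : IsLUB s a :=
  ⟨hub, fun _ hb => le_of_forall_lt fun _ hc =>
    let ⟨_, hd, hcd⟩ := h _ hc; hcd.trans_le (hb hd)⟩

theorem IsLUB.range_const_add {α ι : Type*} [AddGroup α] [LinearOrder α] [AddLeftMono α]
    {w : ι → α} {a : α} (h : IsLUB (range w) a) (c : α) :
    IsLUB (range fun i => c + w i) (c + a) := by
  have := (OrderIso.addLeft c).isLUB_image'.2 h
  rwa [← range_comp] at this

theorem isLUB_range_unpair {α : Type*} [LinearOrder α] {u : ℕ → ℕ → α} {v : ℕ → α} {a : α}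
    (hu : ∀ k, IsLUB (range (u k)) (v k)) (hv : IsLUB (range v) a) :
    IsLUB (range fun i => u (Nat.unpair i).1 (Nat.unpair i).2) a := by
  refine isLUB_of_forall_lt_exists_gt ?_ fun b hb => ?_
  · rintro _ ⟨i, rfl⟩
    exact ((hu _).1 (mem_range_self _)).trans (hv.1 (mem_range_self _))
  · obtain ⟨_, ⟨k, rfl⟩, hbk⟩ := (lt_isLUB_iff hv).1 hb
    obtain ⟨_, ⟨j, rfl⟩, hbj⟩ := (lt_isLUB_iff (hu k)).1 hbk
    exact ⟨_, ⟨Nat.pair k j, rfl⟩, by simpa using hbj⟩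

theorem tendsto_partialSups_of_isLUB {α : Type*} [Lattice α] [TopologicalSpace α]
    [SupConvergenceClass α] {f : ℕ → α} {a : α} (h : IsLUB (range f) a) :
    Tendsto (partialSups f) atTop (𝓝 a) :=
  tendsto_atTop_isLUB (partialSups_monotone f)
    ((isLUB_congr (upperBounds_range_partialSups f)).2 h)

theorem partialSups_eq_sup'_fin {α : Type*} [SemilatticeSup α] (f : ℕ → α) (n : ℕ) :
    partialSups f n = Finset.univ.sup' Finset.univ_nonempty (fun i : Fin (n + 1) => f i) := by
  rw [partialSups_eq_sup'_range]
  apply le_antisymm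
  · exact Finset.sup'_le _ _ fun i hi => Finset.le_sup'_of_le (fun i : Fin (n + 1) => f i)
      (Finset.mem_univ ⟨i, Finset.mem_range.1 hi⟩) le_rfl
  · exact Finset.sup'_le _ _ fun i _ => Finset.le_sup' f (Finset.mem_range.2 i.2)

theorem AffineMap.convexOn {𝕜 E β : Type*} [Ring 𝕜] [PartialOrder 𝕜] [AddCommGroup E]
    [Module 𝕜 E] [AddCommGroup β] [PartialOrder β] [IsOrderedAddMonoid β] [Module 𝕜 β]
    (f : E →ᵃ[𝕜] β) {s : Set E} (hs : Convex 𝕜 s) : ConvexOn 𝕜 s f := by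
  rw [f.decomp]
  exact (f.linear.convexOn hs).add_const _

theorem ConvexOn.partialSups {𝕜 E β : Type*} [Semiring 𝕜] [PartialOrder 𝕜] [AddCommMonoid E]
    [LinearOrder β] [AddCommMonoid β] [IsOrderedAddMonoid β] [SMul 𝕜 E] [Module 𝕜 β]
    [PosSMulStrictMono 𝕜 β] {s : Set E} {f : ℕ → E → β} (hf : ∀ i, ConvexOn 𝕜 s (f i))
    (n : ℕ) : ConvexOn 𝕜 s (partialSups f n) := by
  induction n with
  | zero => simpa using hf 0
  | succ n ih =>
    rw [← Order.succ_eq_add_one, partialSups_succ]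
    exact ih.sup (hf _)

section LipschitzEnvelope

variable {Y : Type*} [PseudoMetricSpace Y] {m : Y → ℝ}

/-- The Pasch–Hausdorff envelope of `m`. -/
noncomputable def lipschitzEnvelope (m : Y → ℝ) (K : ℝ≥0) (y : Y) : ℝ :=
  ⨅ y', m y' + K * dist y y'

theorem bddBelow_range_add_mul_dist (hm : BddBelow (range m)) (K : ℝ≥0) (y : Y) :
    BddBelow (range fun y' => m y' + K * dist y y') := by
  obtain ⟨C, hC⟩ := hm
  refine ⟨C, ?_⟩
  rintro _ ⟨y', rfl⟩
  exact le_add_of_le_of_nonneg (hC (mem_range_self y')) (by positivity)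

theorem lipschitzEnvelope_le (hm : BddBelow (range m)) (K : ℝ≥0) (y : Y) :
    lipschitzEnvelope m K y ≤ m y := by
  simpa [lipschitzEnvelope] using ciInf_le (bddBelow_range_add_mul_dist hm K y) y

theorem lipschitzWith_lipschitzEnvelope (hm : BddBelow (range m)) (K : ℝ≥0) :
    LipschitzWith K (lipschitzEnvelope m K) := by
  refine LipschitzWith.of_le_add_mul K fun y z => ?_
  have : Nonempty Y := ⟨y⟩
  rw [← sub_le_iff_le_add]
  refine le_ciInf fun y' => ?_
  calc lipschitzEnvelope m K y - K * dist y z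
      ≤ m y' + K * dist y y' - K * dist y z :=
        sub_le_sub_right (ciInf_le (bddBelow_range_add_mul_dist hm K y) y') _
    _ ≤ m y' + K * dist z y' := by nlinarith [dist_triangle y z y', K.2]

theorem LowerSemicontinuousAt.isLUB_range_lipschitzEnvelope (hm : BddBelow (range m)) {y : Y}
    (hmy : LowerSemicontinuousAt m y) :
    IsLUB (range fun n : ℕ => lipschitzEnvelope m n y) (m y) := by
  refine isLUB_of_forall_lt_exists_gt ?_ fun c hc => ?_
  · rintro _ ⟨n, rfl⟩
    exact lipschitzEnvelope_le hm n y
  obtain ⟨c', hcc', hc'⟩ := exists_between hc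
  obtain ⟨δ, hδ, hball⟩ := Metric.mem_nhds_iff.1 (hmy c' hc')
  obtain ⟨C, hC⟩ := hm
  obtain ⟨n, hn⟩ := exists_nat_ge ((c' - C) / δ)
  rw [div_le_iff₀ hδ] at hn
  have : Nonempty Y := ⟨y⟩
  refine ⟨_, mem_range_self n, hcc'.trans_le (le_ciInf fun y' => ?_)⟩
  have hCy' : C ≤ m y' := hC (mem_range_self y')
  push_cast
  by_cases hy' : dist y' y < δ
  · have : c' < m y' := hball hy'
    nlinarith [dist_nonneg (x := y) (y := y'), n.cast_nonneg (α := ℝ)]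
  · rw [dist_comm] at hy'
    nlinarith [n.cast_nonneg (α := ℝ)]

end LipschitzEnvelope

theorem IsCompact.lowerSemicontinuous_iInf {α β : Type*} [TopologicalSpace α]
    [TopologicalSpace β] {K : Set α} (hK : IsCompact K) [Nonempty K] {g : α × β → ℝ}
    (hg : LowerSemicontinuousOn g (K ×ˢ univ)) :
    LowerSemicontinuous fun y => ⨅ x : K, g (x, y) := by
  intro y₀ c hc
  obtain ⟨c', hcc', hc'⟩ := exists_between hc
  obtain ⟨u, hu, hgu⟩ := lowerSemicontinuousOn_iff_preimage_Ioi.1 hg c'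
  have hu_iff : ∀ x ∈ K, ∀ y, c' < g (x, y) ↔ (x, y) ∈ u := fun x hx y => by
    simpa [hx] using Set.ext_iff.1 hgu (x, y)
  have hsection : LowerSemicontinuousOn (fun x => g (x, y₀)) K :=
    hg.comp (Continuous.prodMk_left y₀).continuousOn fun x hx => ⟨hx, mem_univ _⟩
  have htube : K ×ˢ {y₀} ⊆ u := by
    rintro ⟨x, y⟩ ⟨hx, rfl : y = y₀⟩
    refine (hu_iff x hx y).1 (hc'.trans_le (ciInf_le ?_ (⟨x, hx⟩ : K)))
    simpa only [image_eq_range] using hsection.bddBelow_of_isCompact hK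
  obtain ⟨U, V, -, hV, hKU, hy₀V, hUV⟩ := generalized_tube_lemma hK isCompact_singleton hu htube
  filter_upwards [hV.mem_nhds (hy₀V rfl)] with y hy
  exact hcc'.trans_le (le_ciInf fun x => ((hu_iff x x.2 y).2 (hUV ⟨hKU x.2, hy⟩)).le)

theorem IsCompact.exists_seq_forall_dist_lt {α ι : Type*} [TopologicalSpace α] [Nonempty ι]
    {K : Set α} (hK : IsCompact K) [MetrizableSpace K] (F : ι → C(α, ℝ)) :
    ∃ s : ℕ → ι, ∀ i, ∀ ε > 0, ∃ k, ∀ x ∈ K, dist (F i x) (F (s k) x) < ε := by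
  have : CompactSpace K := isCompact_iff_compactSpace.1 hK
  let R : ι → C(K, ℝ) := fun i => (F i).restrict K
  obtain ⟨u, hu⟩ := exists_dense_seq (range R)
  choose s hs using fun k => (u k).2
  refine ⟨s, fun i ε hε => ?_⟩
  obtain ⟨k, hk⟩ := Metric.denseRange_iff.1 hu ⟨R i, mem_range_self i⟩ ε hε
  refine ⟨k, fun x hx => ?_⟩
  refine (ContinuousMap.dist_apply_le_dist (f := R i) (g := R (s k)) ⟨x, hx⟩).trans_lt ?_
  rw [hs]
  exact hk

section ConvexMinorants

variable {E : Type*} [AddCommGroup E] [Module ℝ E] [TopologicalSpace E] [IsTopologicalAddGroup E]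
  [ContinuousSMul ℝ E] [LocallyConvexSpace ℝ E] {s : Set E} {φ : E → ℝ}

theorem ConvexOn.exists_continuousAffineMap_le_eq (hs : IsClosed s)
    (hφ : LowerSemicontinuousOn φ s) (hφc : ConvexOn ℝ s φ) {x : E} (hx : x ∈ s) {c : ℝ}
    (hc : c < φ x) : ∃ b : E →ᴬ[ℝ] ℝ, (∀ z ∈ s, b z ≤ φ z) ∧ b x = c := by
  obtain ⟨l, d, hle, heq⟩ := hφc.exists_affine_le_of_lt (𝕜 := ℝ) hx hc hs hφ
  refine ⟨l.toContinuousAffineMap + ContinuousAffineMap.const ℝ E d, fun z hz => ?_, ?_⟩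
  · simpa using hle ⟨z, hz⟩
  · simpa using heq

/-- Fenchel–Moreau: `φ` is the supremum of its continuous affine minorants `b`, and each such `b`
is uniformly close on `s` to some `a k`, for which then `⨅ z ∈ s, (φ z - a k z) ≥ -ε`. -/
theorem ConvexOn.isLUB_range_add_iInf_sub {ι : Type*} (hs : IsClosed s)
    (hφ : LowerSemicontinuousOn φ s) (hφc : ConvexOn ℝ s φ) {a : ι → E →ᴬ[ℝ] ℝ}
    (ha : ∀ b : E →ᴬ[ℝ] ℝ, ∀ ε > 0, ∃ k, ∀ z ∈ s, dist (b z) (a k z) < ε)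
    (hbdd : ∀ k, BddBelow (range fun z : s => φ z - a k z)) {x : E} (hx : x ∈ s) :
    IsLUB (range fun k => a k x + ⨅ z : s, (φ z - a k z)) (φ x) := by
  have : Nonempty s := ⟨⟨x, hx⟩⟩
  refine isLUB_of_forall_lt_exists_gt ?_ fun c hc => ?_
  · rintro _ ⟨k, rfl⟩
    linarith [ciInf_le (hbdd k) ⟨x, hx⟩]
  obtain ⟨d, hcd, hd⟩ := exists_between hc
  obtain ⟨b, hbφ, hbx⟩ := hφc.exists_continuousAffineMap_le_eq hs hφ hx hd
  obtain ⟨k, hk⟩ := ha b ((d - c) / 2) (by linarith)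
  have hinf : -((d - c) / 2) ≤ ⨅ z : s, (φ z - a k z) := le_ciInf fun z => by
    linarith [(abs_lt.1 (hk z z.2)).1, hbφ z z.2]
  exact ⟨_, mem_range_self k, by linarith [(abs_lt.1 (hk x hx)).2]⟩

end ConvexMinorants

/-- Lemma A.7: Piecewise-convex continuous approximation from below: a
bounded lower semicontinuous `f : X × Y → ℝ` that is convex in `x` is the increasing
pointwise limit of continuous functions, convex in `x`, each a finite maximum of
functions of the form `a(x) + φ(y)` with `a` continuous affine and `φ` continuous. -/
theorem stmt_18 {E : Type*} [AddCommGroup E] [Module ℝ E] [TopologicalSpace E]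
    [IsTopologicalAddGroup E] [ContinuousSMul ℝ E] [LocallyConvexSpace ℝ E] [T2Space E]
    (X : Set E) (hXc : IsCompact X) (hXconv : Convex ℝ X) (hXne : X.Nonempty)
    (hXmetr : TopologicalSpace.MetrizableSpace ↥X)
    {Y : Type*} [MetricSpace Y]
    (f : E → Y → ℝ)
    (hbdd : ∃ M : ℝ, ∀ x ∈ X, ∀ y, |f x y| ≤ M)
    (hlsc : LowerSemicontinuousOn (fun p : E × Y => f p.1 p.2) (X ×ˢ Set.univ))
    (hconv : ∀ y, ConvexOn ℝ X (fun x => f x y)) :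
    ∃ fn : ℕ → E → Y → ℝ,
      -- continuity
      (∀ n, Continuous (fun p : E × Y => fn n p.1 p.2)) ∧
      -- convexity in x
      (∀ n y, ConvexOn ℝ X (fun x => fn n x y)) ∧
      -- increasing and below f on X × Y
      (∀ n, ∀ x ∈ X, ∀ y, fn n x y ≤ fn (n + 1) x y) ∧
      (∀ n, ∀ x ∈ X, ∀ y, fn n x y ≤ f x y) ∧
      -- pointwise convergence to f on X × Y
      (∀ x ∈ X, ∀ y, Tendsto (fun n => fn n x y) atTop (nhds (f x y))) ∧
      -- finite-max-of-affine-plus-continuous form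
      (∀ n, ∃ k : ℕ, ∃ a : Fin (k + 1) → E →ᵃ[ℝ] ℝ, ∃ φ : Fin (k + 1) → Y → ℝ,
        (∀ i, Continuous (a i)) ∧ (∀ i, Continuous (φ i)) ∧
        ∀ x y, fn n x y =
          Finset.univ.sup' Finset.univ_nonempty (fun i : Fin (k + 1) => a i x + φ i y)) := by
  obtain ⟨M, hM⟩ := hbdd
  have : Nonempty X := hXne.to_subtype
  obtain ⟨a, ha⟩ := hXc.exists_seq_forall_dist_lt (fun b : E →ᴬ[ℝ] ℝ => (b : C(E, ℝ)))
  choose B hB using fun k => hXc.bddAbove_image (a k).continuous.continuousOn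
  have hlow : ∀ k y, ∀ x ∈ X, -M - B k ≤ f x y - a k x := fun k y x hx => by
    linarith [(abs_le.1 (hM x hx y)).1, hB k (mem_image_of_mem _ hx)]
  set m : ℕ → Y → ℝ := fun k y => ⨅ x : X, (f x y - a k x)
  have hm_lsc (k : ℕ) : LowerSemicontinuous (m k) :=
    hXc.lowerSemicontinuous_iInf (g := fun p => f p.1 p.2 + -a k p.1)
      (hlsc.add ((a k).continuous.comp continuous_fst).neg.continuousOn.lowerSemicontinuousOn)
  have hm_bdd (k : ℕ) : BddBelow (range (m k)) :=
    ⟨-M - B k, by rintro _ ⟨y, rfl⟩; exact le_ciInf fun x => hlow k y x x.2⟩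
  set g : ℕ → E → Y → ℝ := fun i x y =>
    a (Nat.unpair i).1 x + lipschitzEnvelope (m (Nat.unpair i).1) (Nat.unpair i).2 y
  have hg_lub : ∀ x ∈ X, ∀ y, IsLUB (range fun i => g i x y) (f x y) := fun x hx y =>
    isLUB_range_unpair
      (fun k => (((hm_lsc k).lowerSemicontinuousAt y).isLUB_range_lipschitzEnvelope
        (hm_bdd k)).range_const_add _)
      ((hconv y).isLUB_range_add_iInf_sub hXc.isClosed
        (hlsc.comp (Continuous.prodMk_left y).continuousOn fun x hx => ⟨hx, mem_univ _⟩) ha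
        (fun k => ⟨-M - B k, by rintro _ ⟨x, rfl⟩; exact hlow k y x x.2⟩) hx)
  refine ⟨fun n x y => partialSups (g · x y) n, fun n => ?_, fun n y => ?_,
    fun n x _ y => partialSups_monotone _ n.le_succ,
    fun n x hx y => partialSups_le _ _ _ fun i _ => (hg_lub x hx y).1 (mem_range_self i),
    fun x hx y => tendsto_partialSups_of_isLUB (hg_lub x hx y), fun n => ?_⟩
  · exact Continuous.partialSups_apply fun i _ => ((a _).continuous.comp continuous_fst).add
      ((lipschitzWith_lipschitzEnvelope (hm_bdd _) _).continuous.comp continuous_snd)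
  · exact (ConvexOn.partialSups (f := fun i x => g i x y)
      (fun i => ((a _ : E →ᵃ[ℝ] ℝ).convexOn hXconv).add_const _) n).congr
      fun x _ => Pi.partialSups_apply _ _ _
  · exact ⟨n, fun i => a (Nat.unpair i).1,
      fun i => lipschitzEnvelope (m (Nat.unpair i).1) (Nat.unpair i).2,
      fun i => (a _).continuous, fun i => (lipschitzWith_lipschitzEnvelope (hm_bdd _) _).continuous,
      fun x y => partialSups_eq_sup'_fin _ n⟩
end

section
/- Let d be the divisible (Bayes-homeomorphic) updating rule d(x,y) = F⁻¹((F(x) ⊘ x ⊙ y)/⟨F(x) ⊘ x, y⟩) for a homeomorphism F of the simplex Δ(Ω), where ⊙ and ⊘ denote componentwise product and division. Then the associated two-stage update collapses: for all interior x, y, z, d_II(x, z; y) := d̂(y, d(x,y), z) = d(x,z), where d̂(x_B, x_D, y) := d(x_D, (x_D ⊘ x_B ⊙ y)/⟨x_D ⊘ x_B, y⟩). In particular, Bayes' rule d(x,y) = y satisfies d_II(x,z;y) = z for all interior x, y, z. -/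
open Finset

/-- Componentwise (Hadamard) product of two vectors. -/
noncomputable def hadProd {Ω : Type*} (u v : Ω → ℝ) : Ω → ℝ := fun ω => u ω * v ω

/-- Componentwise division of two vectors. -/
noncomputable def hadDiv {Ω : Type*} (u v : Ω → ℝ) : Ω → ℝ := fun ω => u ω / v ω

/-- The standard inner product `⟨u, v⟩ = ∑ u_ω v_ω`. -/
noncomputable def ip {Ω : Type*} [Fintype Ω] (u v : Ω → ℝ) : ℝ := ∑ ω, u ω * v ω

/-- The interior of the simplex: strictly positive vectors summing to one. -/
def interiorSimplex (Ω : Type*) [Fintype Ω] : Set (Ω → ℝ) :=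
  {p | (∀ ω, 0 < p ω) ∧ ∑ ω, p ω = 1}

/-- The Bayesian-posterior correction `(x_D ⊘ x_B ⊙ y) / ⟨x_D ⊘ x_B, y⟩`. -/
noncomputable def bayesKer {Ω : Type*} [Fintype Ω] (xB xD y : Ω → ℝ) : Ω → ℝ :=
  (ip (hadDiv xD xB) y)⁻¹ • hadProd (hadDiv xD xB) y

/-- The divisible updating rule `d(x,y) = F⁻¹((F(x) ⊘ x ⊙ y)/⟨F(x) ⊘ x, y⟩)`. -/
noncomputable def divRule {Ω : Type*} [Fintype Ω] (F Finv : (Ω → ℝ) → (Ω → ℝ))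
    (x y : Ω → ℝ) : Ω → ℝ :=
  Finv (bayesKer x (F x) y)

/-- The correction `d̂(x_B, x_D, y) = d(x_D, (x_D ⊘ x_B ⊙ y)/⟨x_D ⊘ x_B, y⟩)`. -/
noncomputable def dhat {Ω : Type*} [Fintype Ω] (F Finv : (Ω → ℝ) → (Ω → ℝ))
    (xB xD y : Ω → ℝ) : Ω → ℝ :=
  divRule F Finv xD (bayesKer xB xD y)

/-!
With `k(x_B, x_D, y) := (x_D ⊘ x_B ⊙ y) / ⟨x_D ⊘ x_B, y⟩` we have `d(x, y) = F⁻¹ (k(x, F x, y))`, so in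
`d̂(y, d(x,y), z)` the `F` applied to `w := d(x,y)` cancels against `F⁻¹`, leaving
`F⁻¹ (k(w, k(x, F x, y), k(y, w, z)))`. The likelihood ratios multiply,
`(F x ⊘ x ⊙ y) ⊘ w ⊙ (w ⊘ y ⊙ z) = F x ⊘ x ⊙ z`, and normalisation forgets the scalar factors, so
this is `F⁻¹ (k(x, F x, z)) = d(x, z)`.
-/

section BayesKer

variable {Ω : Type*} [Fintype Ω]

lemma bayesKer_apply (xB xD y : Ω → ℝ) (ω : Ω) :
    bayesKer xB xD y ω = (ip (hadDiv xD xB) y)⁻¹ * (xD ω / xB ω * y ω) := rfl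

lemma nonempty_of_mem_interiorSimplex {p : Ω → ℝ} (hp : p ∈ interiorSimplex Ω) : Nonempty Ω := by
  by_contra h
  rw [not_nonempty_iff] at h
  simpa using hp.2

lemma ip_hadDiv_pos [Nonempty Ω] {u x y : Ω → ℝ} (hu : ∀ ω, 0 < u ω) (hx : ∀ ω, 0 < x ω)
    (hy : ∀ ω, 0 < y ω) : 0 < ip (hadDiv u x) y :=
  Finset.sum_pos (fun ω _ => mul_pos (div_pos (hu ω) (hx ω)) (hy ω)) Finset.univ_nonempty

lemma bayesKer_mem_interiorSimplex [Nonempty Ω] {xB xD y : Ω → ℝ} (hB : ∀ ω, 0 < xB ω)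
    (hD : ∀ ω, 0 < xD ω) (hy : ∀ ω, 0 < y ω) : bayesKer xB xD y ∈ interiorSimplex Ω := by
  have hnorm := ip_hadDiv_pos hD hB hy
  refine ⟨fun ω => ?_, ?_⟩
  · rw [bayesKer_apply]
    exact mul_pos (inv_pos.2 hnorm) (mul_pos (div_pos (hD ω) (hB ω)) (hy ω))
  · simp only [bayesKer_apply, ← Finset.mul_sum]
    exact inv_mul_cancel₀ hnorm.ne'

lemma bayesKer_self {x z : Ω → ℝ} (hx : ∀ ω, x ω ≠ 0) (hz : ∑ ω, z ω = 1) :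
    bayesKer x x z = z := by
  have hnorm : ip (hadDiv x x) z = 1 := by
    simp only [ip, hadDiv, div_self (hx _), one_mul, hz]
  funext ω
  rw [bayesKer_apply, hnorm, div_self (hx ω)]
  ring

theorem bayesKer_bayesKer {x u y w z : Ω → ℝ} (hy : ∀ ω, y ω ≠ 0) (hw : ∀ ω, w ω ≠ 0)
    (hxuy : ip (hadDiv u x) y ≠ 0) (hywz : ip (hadDiv w y) z ≠ 0) :
    bayesKer w (bayesKer x u y) (bayesKer y w z) = bayesKer x u z := by
  set c := (ip (hadDiv u x) y)⁻¹ * (ip (hadDiv w y) z)⁻¹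
  have hc : c ≠ 0 := mul_ne_zero (inv_ne_zero hxuy) (inv_ne_zero hywz)
  have hratio : ∀ ω, bayesKer x u y ω / w ω * bayesKer y w z ω = c * (u ω / x ω * z ω) := by
    intro ω
    simp only [bayesKer_apply, c]
    field_simp [hy ω, hw ω]
  have hnorm : ip (hadDiv (bayesKer x u y) w) (bayesKer y w z) = c * ip (hadDiv u x) z := by
    simp only [ip, hadDiv, hratio, Finset.mul_sum]
  funext ω
  rw [bayesKer_apply w, hnorm, hratio, mul_inv, mul_mul_mul_comm, inv_mul_cancel₀ hc, one_mul,
    bayesKer_apply]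

end BayesKer

theorem dhat_divRule {Ω : Type*} [Fintype Ω] {F Finv : (Ω → ℝ) → (Ω → ℝ)}
    (hF : ∀ p ∈ interiorSimplex Ω, F p ∈ interiorSimplex Ω)
    (hFinv : ∀ p ∈ interiorSimplex Ω, Finv p ∈ interiorSimplex Ω)
    (hright : ∀ p ∈ interiorSimplex Ω, F (Finv p) = p) {x y z : Ω → ℝ}
    (hx : x ∈ interiorSimplex Ω) (hy : y ∈ interiorSimplex Ω) (hz : z ∈ interiorSimplex Ω) :
    dhat F Finv y (divRule F Finv x y) z = divRule F Finv x z := by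
  have := nonempty_of_mem_interiorSimplex hx
  have hk := bayesKer_mem_interiorSimplex hx.1 (hF x hx).1 hy.1
  have hw := (hFinv _ hk).1
  unfold dhat divRule
  rw [hright _ hk, bayesKer_bayesKer (fun ω => (hy.1 ω).ne') (fun ω => (hw ω).ne')
    (ip_hadDiv_pos (hF x hx).1 hx.1 hy.1).ne' (ip_hadDiv_pos hw hy.1 hz.1).ne']

theorem stmt_19_general {Ω : Type*} [Fintype Ω]
    (F Finv : (Ω → ℝ) → (Ω → ℝ))
    (hF : ∀ p ∈ interiorSimplex Ω, F p ∈ interiorSimplex Ω)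
    (hFinv : ∀ p ∈ interiorSimplex Ω, Finv p ∈ interiorSimplex Ω)
    (hright : ∀ p ∈ interiorSimplex Ω, F (Finv p) = p) :
    (∀ x ∈ interiorSimplex Ω, ∀ y ∈ interiorSimplex Ω, ∀ z ∈ interiorSimplex Ω,
      dhat F Finv y (divRule F Finv x y) z = divRule F Finv x z) ∧
    (∀ x ∈ interiorSimplex Ω, ∀ y ∈ interiorSimplex Ω, ∀ z ∈ interiorSimplex Ω,
      dhat (fun p => p) (fun p => p) y (divRule (fun p => p) (fun p => p) x y) z
        = z) := by
  refine ⟨fun x hx y hy z hz => dhat_divRule hF hFinv hright hx hy hz,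
    fun x hx y hy z hz => ?_⟩
  rw [dhat_divRule (fun p hp => hp) (fun p hp => hp) (fun p _ => rfl) hx hy hz]
  exact bayesKer_self (fun ω => (hx.1 ω).ne') hz.2

/-- For a divisible (Bayes-homeomorphic) updating rule given by a
bijection `F` of the simplex, the two-stage update collapses:
`d_II(x, z; y) = d̂(y, d(x,y), z) = d(x,z)` for interior `x, y, z`; in particular,
Bayes' rule (`F = id`) satisfies `d_II(x, z; y) = z`. -/
theorem stmt_19 {Ω : Type*} [Fintype Ω]
    (F Finv : (Ω → ℝ) → (Ω → ℝ))
    (hF : ∀ p ∈ interiorSimplex Ω, F p ∈ interiorSimplex Ω)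
    (hFinv : ∀ p ∈ interiorSimplex Ω, Finv p ∈ interiorSimplex Ω)
    (hleft : ∀ p ∈ interiorSimplex Ω, Finv (F p) = p)
    (hright : ∀ p ∈ interiorSimplex Ω, F (Finv p) = p) :
    (∀ x ∈ interiorSimplex Ω, ∀ y ∈ interiorSimplex Ω, ∀ z ∈ interiorSimplex Ω,
      dhat F Finv y (divRule F Finv x y) z = divRule F Finv x z) ∧
    (∀ x ∈ interiorSimplex Ω, ∀ y ∈ interiorSimplex Ω, ∀ z ∈ interiorSimplex Ω,
      dhat (fun p => p) (fun p => p) y (divRule (fun p => p) (fun p => p) x y) z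
        = z) :=
  stmt_19_general F Finv hF hFinv hright
end
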